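/- If H is a chainless subgroup of PL₊(I), then H is balanced: for every subgroup G ≤ H and every orbital A of G, every element of G that realises one end of A also realises the other end of A. -/

import Mathlib

open Set

namespace PLPaper

/-- We model `PL₊(I)` inside the group of bijections of `ℝ` with *opposite*
composition, so that the group acts on `ℝ` on the right:
`x · (g * h) = (x · g) · h`. -/
abbrev PermR : Type := (Equiv.Perm ℝ)ᵐᵒᵖ

/-- The (right) action of `g` on the point `x`. -/
def ap (g : PermR) (x : ℝ) : ℝ := g.unop x

/-- `g` is affine on a neighbourhood of `x`. -/
def IsLocallyAffineAt (g : PermR) (x : ℝ) : Prop :=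
  ∃ m b : ℝ, ∀ᶠ y in nhds x, ap g y = m * y + b

/-- The breakpoints of `g`: points of `(0,1)` where `g` is not locally affine
(equivalently, for a PL map, where the derivative fails to exist). -/
def Breakpoints (g : PermR) : Set ℝ :=
  {x ∈ Ioo (0:ℝ) 1 | ¬ IsLocallyAffineAt g x}

/-- `g` is an orientation-preserving piecewise-linear homeomorphism of `[0,1]`
(extended by the identity to all of `ℝ`), with finitely many breakpoints. -/
def IsPL (g : PermR) : Prop :=
  StrictMono (ap g) ∧ (∀ x ∉ Ioo (0:ℝ) 1, ap g x = x) ∧ (Breakpoints g).Finite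

/-- The support of `g`. -/
def Supp (g : PermR) : Set ℝ := {x | ap g x ≠ x}

/-- `(a,b)` is an orbital of `g`, i.e. a connected component of `Supp g`. -/
def IsOrbital (g : PermR) (a b : ℝ) : Prop :=
  a < b ∧ Ioo a b ⊆ Supp g ∧ a ∉ Supp g ∧ b ∉ Supp g

/-- The support of a subgroup `G`. -/
def GSupp (G : Subgroup PermR) : Set ℝ := ⋃ g ∈ (G : Set PermR), Supp g

/-- `(a,b)` is an orbital of the group `G`, i.e. a connected component of its support. -/
def IsGroupOrbital (G : Subgroup PermR) (a b : ℝ) : Prop :=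
  a < b ∧ Ioo a b ⊆ GSupp G ∧ a ∉ GSupp G ∧ b ∉ GSupp G

/-- The pair `g, h` carries a transition chain: orbitals `(a,b)` of `g` and
`(c,d)` of `h` with `a < c < b < d`. -/
def ElemsTransitionChain (g h : PermR) : Prop :=
  ∃ a b c d : ℝ, IsOrbital g a b ∧ IsOrbital h c d ∧ a < c ∧ c < b ∧ b < d

/-- The pair `g, h` carries a one-sided overlap: orbitals `(a,b)` of `g` and
`(a,c)` of `h`, or `(a,b)` of `g` and `(c,b)` of `h`, where `a < c < b`. -/
def ElemsOneSidedOverlap (g h : PermR) : Prop :=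
  ∃ a b c : ℝ, a < c ∧ c < b ∧
    ((IsOrbital g a b ∧ IsOrbital h a c) ∨ (IsOrbital g a b ∧ IsOrbital h c b))

def AdmitsTransitionChain (G : Subgroup PermR) : Prop :=
  ∃ g ∈ G, ∃ h ∈ G, ElemsTransitionChain g h

def AdmitsOneSidedOverlap (G : Subgroup PermR) : Prop :=
  ∃ g ∈ G, ∃ h ∈ G, ElemsOneSidedOverlap g h

/-- `G` admits a bad overlap: orbitals `A` of `f ∈ G` and `B` of `g ∈ G` which
intersect, are distinct, and neither closure is contained in the other orbital. -/
def AdmitsBadOverlap (G : Subgroup PermR) : Prop :=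
  ∃ f ∈ G, ∃ g ∈ G, ∃ a b c d : ℝ, IsOrbital f a b ∧ IsOrbital g c d ∧
    (Ioo a b ∩ Ioo c d).Nonempty ∧ Ioo a b ≠ Ioo c d ∧
    ¬ Icc a b ⊆ Ioo c d ∧ ¬ Icc c d ⊆ Ioo a b

/-- A tower: a set of signed orbitals `((a,b), g)` with pairwise nested orbitals,
where equal orbitals force equal signatures. -/
def IsTower (T : Set ((ℝ × ℝ) × PermR)) : Prop :=
  (∀ p ∈ T, IsOrbital p.2 p.1.1 p.1.2) ∧
  (∀ p ∈ T, ∀ q ∈ T,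
      Ioo p.1.1 p.1.2 ⊆ Ioo q.1.1 q.1.2 ∨ Ioo q.1.1 q.1.2 ⊆ Ioo p.1.1 p.1.2) ∧
  (∀ p ∈ T, ∀ q ∈ T, p.1 = q.1 → p.2 = q.2)

/-- `G` admits the tower `T` if `T` is a tower all of whose signatures lie in `G`. -/
def AdmitsTower (G : Subgroup PermR) (T : Set ((ℝ × ℝ) × PermR)) : Prop :=
  IsTower T ∧ ∀ p ∈ T, p.2 ∈ G

def AdmitsInfiniteTower (G : Subgroup PermR) : Prop :=
  ∃ T : Set ((ℝ × ℝ) × PermR), AdmitsTower G T ∧ T.Infinite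

/-- The set of breakpoints of the elements of a set `S`. -/
def BreakSet (S : Set PermR) : Set ℝ := ⋃ g ∈ S, Breakpoints g

/-- The derived length of a group: the least `n` with `derivedSeries G n = ⊥`. -/
noncomputable def derivedLength (G : Type*) [Group G] : ℕ :=
  sInf {n : ℕ | derivedSeries G n = ⊥}

/-- `g` realises the left end of the interval `(a,d)`:
`g` has an orbital `(a,b)` with `b ≤ d`. -/
def RealisesLeftEnd (g : PermR) (a d : ℝ) : Prop := ∃ b : ℝ, b ≤ d ∧ IsOrbital g a b

/-- `g` realises the right end of the interval `(a,d)`: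
`g` has an orbital `(c,d)` with `a ≤ c`. -/
def RealisesRightEnd (g : PermR) (a d : ℝ) : Prop := ∃ c : ℝ, a ≤ c ∧ IsOrbital g c d

/-!
Let `g ∈ G` have an orbital `(a, p)` with `p < b`. Then `p` lies in the orbital `(a, b)` of `G`, so
some `k ∈ G` moves `p`, and we choose its direction so that `k⁻¹ p ∈ (a, p)`. Every element of `G`
fixes `a`, and just to the right of a fixed point a PL map is a homothety centred there; homotheties
with a common centre commute, so the commutator `u = g⁻¹ k⁻¹ g k` is the identity on some
`(a, a + ε)`. But `u p = k (g (k⁻¹ p)) ≠ p`, so the orbital `(α, β)` of `u` through `p` satisfies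
`a < α < p < β`: with the orbital `(a, p)` of `g` it forms a transition chain. The other end is
symmetric.
-/

open Filter Topology

lemma ap_mul (g h : PermR) (x : ℝ) : ap (g * h) x = ap h (ap g x) := rfl

@[simp]
lemma ap_inv_ap (g : PermR) (x : ℝ) : ap g⁻¹ (ap g x) = x := by
  simp [ap]

@[simp]
lemma ap_ap_inv (g : PermR) (x : ℝ) : ap g (ap g⁻¹ x) = x := by
  simp [ap]

lemma strictMono_ap_inv {g : PermR} (hg : StrictMono (ap g)) : StrictMono (ap g⁻¹) :=
  fun x y hxy => by rwa [← hg.lt_iff_lt, ap_ap_inv, ap_ap_inv]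

lemma ap_inv_lt_self_iff {g : PermR} (hg : StrictMono (ap g)) {x : ℝ} :
    ap g⁻¹ x < x ↔ x < ap g x := by
  rw [← hg.lt_iff_lt, ap_ap_inv]

lemma lt_ap_inv_self_iff {g : PermR} (hg : StrictMono (ap g)) {x : ℝ} :
    x < ap g⁻¹ x ↔ ap g x < x := by
  rw [← hg.lt_iff_lt, ap_ap_inv]

lemma ap_inv_eq_self {g : PermR} {x : ℝ} (hx : ap g x = x) : ap g⁻¹ x = x := by
  conv_lhs => rw [← hx, ap_inv_ap]

lemma ap_commutator_ne_self {g k : PermR} {p : ℝ} (hp : ap g p = p) (hkp : ap k⁻¹ p ∈ Supp g) :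
    ap (g⁻¹ * k⁻¹ * g * k) p ≠ p := by
  simp only [ap_mul, ap_inv_eq_self hp]
  exact fun h => hkp (by simpa using congrArg (ap k⁻¹) h)

lemma continuous_ap {g : PermR} (hg : StrictMono (ap g)) : Continuous (ap g) :=
  hg.monotone.continuous_of_surjective (MulOpposite.unop g).surjective

lemma tendsto_ap_nhdsWithin {g : PermR} (hg : StrictMono (ap g)) {a : ℝ} (ha : ap g a = a)
    {s : Set ℝ} (hs : s = Ioi a ∨ s = Iio a) : Tendsto (ap g) (𝓝[s] a) (𝓝[s] a) := by
  have hmaps : MapsTo (ap g) s s := by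
    rcases hs with rfl | rfl <;> intro x hx <;> simpa [ha] using hg hx
  simpa only [ha] using
    ((continuous_ap hg).continuousAt (x := a)).continuousWithinAt.tendsto_nhdsWithin hmaps

lemma exists_affine_of_forall_isLocallyAffineAt {g : PermR} {U : Set ℝ} (hUo : IsOpen U)
    (hUc : IsPreconnected U) (h : ∀ x ∈ U, IsLocallyAffineAt g x) :
    ∃ m c : ℝ, ∀ x ∈ U, ap g x = m * x + c := by
  have hlin (m c y : ℝ) : HasDerivAt (fun y => m * y + c) m y := by
    simpa using ((hasDerivAt_id y).const_mul m).add_const c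
  have hderiv : ∀ x ∈ U, ∃ m, HasDerivAt (ap g) m x ∧ deriv (ap g) =ᶠ[𝓝 x] fun _ => m := by
    intro x hx
    obtain ⟨m, c, hmc⟩ := h x hx
    refine ⟨m, (hlin m c x).congr_of_eventuallyEq hmc, ?_⟩
    filter_upwards [hmc.eventually_nhds] with y hy
    exact ((hlin m c y).congr_of_eventuallyEq hy).deriv
  have hdiff : DifferentiableOn ℝ (ap g) U := fun x hx =>
    (hderiv x hx).choose_spec.1.differentiableAt.differentiableWithinAt
  have hdiff' : DifferentiableOn ℝ (deriv (ap g)) U := fun x hx =>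
    ((differentiableAt_const _).congr_of_eventuallyEq
      (hderiv x hx).choose_spec.2).differentiableWithinAt
  obtain ⟨m, hm⟩ := hUo.exists_is_const_of_deriv_eq_zero hUc hdiff' fun x hx => by
    simp [(hderiv x hx).choose_spec.2.deriv_eq]
  obtain ⟨c, hc⟩ := hUo.exists_eq_add_of_deriv_eq hUc hdiff (g := fun x => m * x)
    (by fun_prop) fun x hx => by simp [hm x hx]
  exact ⟨m, c, hc⟩

namespace IsPL

variable {g : PermR}

lemma continuous (hg : IsPL g) : Continuous (ap g) := continuous_ap hg.1

lemma exists_isOrbital (hg : IsPL g) {x : ℝ} (hx : x ∈ Supp g) :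
    ∃ α β : ℝ, IsOrbital g α β ∧ α < x ∧ x < β := by
  have hx01 : x ∈ Ioo (0 : ℝ) 1 := by_contra fun h => hx (hg.2.1 x h)
  have hfix : IsClosed {y | ap g y = y} := isClosed_eq hg.continuous continuous_id
  set A := {y | ap g y = y} ∩ Iic x
  set B := {y | ap g y = y} ∩ Ici x
  have hA : A.Nonempty := ⟨0, hg.2.1 0 (by simp), hx01.1.le⟩
  have hB : B.Nonempty := ⟨1, hg.2.1 1 (by simp), hx01.2.le⟩
  have hα : sSup A ∈ A := (hfix.inter isClosed_Iic).csSup_mem hA ⟨x, fun y hy => hy.2⟩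
  have hβ : sInf B ∈ B := (hfix.inter isClosed_Ici).csInf_mem hB ⟨x, fun y hy => hy.2⟩
  have hαx : sSup A < x := hα.2.lt_of_ne fun h => hx (h ▸ hα.1)
  have hxβ : x < sInf B := hβ.2.lt_of_ne' fun h => hx (h ▸ hβ.1)
  refine ⟨sSup A, sInf B, ⟨hαx.trans hxβ, fun z hz hzfix => ?_, not_not.mpr hα.1,
    not_not.mpr hβ.1⟩, hαx, hxβ⟩
  rcases le_total z x with hzx | hxz
  · exact hz.1.not_ge (le_csSup ⟨x, fun y hy => hy.2⟩ ⟨hzfix, hzx⟩)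
  · exact hz.2.not_ge (csInf_le ⟨x, fun y hy => hy.2⟩ ⟨hzfix, hxz⟩)

lemma finite_not_isLocallyAffineAt (hg : IsPL g) : {x | ¬ IsLocallyAffineAt g x}.Finite := by
  refine (hg.2.2.union (toFinite {0, 1})).subset fun x hx => ?_
  by_contra hmem
  simp only [Breakpoints, mem_union, mem_ofPred_eq, mem_insert_iff, mem_singleton_iff,
    not_or] at hmem
  by_cases hx01 : x ∈ Ioo (0 : ℝ) 1
  · exact hmem.1 ⟨hx01, hx⟩
  · have hout : x ∈ (Icc (0 : ℝ) 1)ᶜ := fun h =>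
      hx01 ⟨h.1.lt_of_ne' hmem.2.1, h.2.lt_of_ne hmem.2.2⟩
    refine hx ⟨1, 0, eventually_of_mem (isClosed_Icc.isOpen_compl.mem_nhds hout) fun y hy => ?_⟩
    simpa using hg.2.1 y fun h => hy (Ioo_subset_Icc_self h)

lemma exists_eventuallyEq_homothety (hg : IsPL g) {a : ℝ} (ha : ap g a = a) {s : Set ℝ}
    (hs : s = Ioi a ∨ s = Iio a) : ∃ r : ℝ, ap g =ᶠ[𝓝[s] a] fun x => a + r * (x - a) := by
  have hso : IsOpen s := by rcases hs with rfl | rfl; exacts [isOpen_Ioi, isOpen_Iio]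
  have hsc : s.OrdConnected := by rcases hs with rfl | rfl <;> infer_instance
  have has : a ∉ s := by rcases hs with rfl | rfl <;> simp
  have : (𝓝[s] a).NeBot := by rcases hs with rfl | rfl <;> infer_instance
  obtain ⟨ε, hε, hball⟩ := Metric.mem_nhds_iff.mp
    ((hg.finite_not_isLocallyAffineAt.sdiff (t := {a})).isClosed.isOpen_compl.mem_nhds
      fun h => h.2 rfl)
  have hU : s ∩ Metric.ball a ε ∈ 𝓝[s] a := inter_mem_nhdsWithin s (Metric.ball_mem_nhds a hε)
  obtain ⟨m, c, hmc⟩ := exists_affine_of_forall_isLocallyAffineAt (hso.inter Metric.isOpen_ball)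
    (by rw [Real.ball_eq_Ioo]; exact (hsc.inter ordConnected_Ioo).isPreconnected)
    fun x hx => by_contra fun h => hball hx.2 ⟨h, fun hxa => has (hxa ▸ hx.1)⟩
  have hlim : Tendsto (ap g) (𝓝[s] a) (𝓝 (m * a + c)) :=
    ((Continuous.tendsto (by fun_prop) a).mono_left nhdsWithin_le_nhds).congr'
      (eventually_of_mem hU fun x hx => (hmc x hx).symm)
  have hcont : Tendsto (ap g) (𝓝[s] a) (𝓝 a) := by
    simpa only [ha] using (hg.continuous.tendsto a).mono_left nhdsWithin_le_nhds
  have hma : m * a + c = a := tendsto_nhds_unique hlim hcont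
  exact ⟨m, eventually_of_mem hU fun x hx => by rw [hmc x hx]; linear_combination hma⟩

end IsPL

section Germs

variable {a : ℝ} {s : Set ℝ}

lemma eventuallyEq_ap_mul_homothety {g k : PermR} (hg : StrictMono (ap g)) (hga : ap g a = a)
    (hs : s = Ioi a ∨ s = Iio a) {r t : ℝ} (hr : ap g =ᶠ[𝓝[s] a] fun x => a + r * (x - a))
    (ht : ap k =ᶠ[𝓝[s] a] fun x => a + t * (x - a)) :
    ap (g * k) =ᶠ[𝓝[s] a] fun x => a + t * r * (x - a) :=
  (ht.comp_tendsto (tendsto_ap_nhdsWithin hg hga hs)).trans <|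
    (hr.fun_comp _).trans <| .of_forall fun x => by simp only [Function.comp_apply]; ring

lemma eventuallyEq_ap_mul_comm {g k : PermR} (hg : IsPL g) (hk : IsPL k) (hga : ap g a = a)
    (hka : ap k a = a) (hs : s = Ioi a ∨ s = Iio a) : ap (g * k) =ᶠ[𝓝[s] a] ap (k * g) := by
  obtain ⟨r, hr⟩ := hg.exists_eventuallyEq_homothety hga hs
  obtain ⟨t, ht⟩ := hk.exists_eventuallyEq_homothety hka hs
  refine (eventuallyEq_ap_mul_homothety hg.1 hga hs hr ht).trans <|
    .trans ?_ (eventuallyEq_ap_mul_homothety hk.1 hka hs ht hr).symm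
  simp only [mul_comm t r, EventuallyEq.rfl]

lemma ap_commutator_eventuallyEq_id {g k : PermR} (hg : IsPL g) (hk : IsPL k) (hga : ap g a = a)
    (hka : ap k a = a) (hs : s = Ioi a ∨ s = Iio a) :
    ap (g⁻¹ * k⁻¹ * g * k) =ᶠ[𝓝[s] a] id := by
  have hmono : StrictMono (ap (k * g)⁻¹) := strictMono_ap_inv (hg.1.comp hk.1)
  have hfix : ap (k * g)⁻¹ a = a := ap_inv_eq_self (by rw [ap_mul, hka, hga])
  have h := (eventuallyEq_ap_mul_comm hg hk hga hka hs).comp_tendsto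
    (tendsto_ap_nhdsWithin hmono hfix hs)
  rw [show g⁻¹ * k⁻¹ * g * k = (k * g)⁻¹ * (g * k) by group]
  exact h.trans (.of_forall fun x => ap_ap_inv _ x)

end Germs

lemma IsOrbital.lt_left_of_eventuallyEq_nhdsGT {u : PermR} {α β a : ℝ} (hu : IsOrbital u α β)
    (hfix : ap u =ᶠ[𝓝[>] a] id) (ha : a < β) : a < α := by
  by_contra! hα
  obtain ⟨x, hx, hux⟩ := (Eventually.and (Ioo_mem_nhdsGT ha) hfix).exists
  exact hu.2.1 ⟨hα.trans_lt hx.1, hx.2⟩ hux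

lemma IsOrbital.lt_right_of_eventuallyEq_nhdsLT {u : PermR} {α β b : ℝ} (hu : IsOrbital u α β)
    (hfix : ap u =ᶠ[𝓝[<] b] id) (hb : α < b) : β < b := by
  by_contra! hβ
  obtain ⟨x, hx, hux⟩ := (Eventually.and (Ioo_mem_nhdsLT hb) hfix).exists
  exact hu.2.1 ⟨hx.1, hx.2.trans_le hβ⟩ hux

section TransitionChain

variable {G : Subgroup PermR}

lemma ap_eq_self_of_notMem_GSupp {g : PermR} (hg : g ∈ G) {x : ℝ} (hx : x ∉ GSupp G) :
    ap g x = x :=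
  not_not.mp fun h => hx (mem_biUnion (x := g) hg h)

lemma exists_mem_ap_lt_of_mem_GSupp (hG : ∀ g ∈ G, StrictMono (ap g)) {x : ℝ}
    (hx : x ∈ GSupp G) : ∃ k ∈ G, ap k x < x := by
  obtain ⟨h, hh, hhx⟩ := mem_iUnion₂.mp hx
  rcases Ne.lt_or_gt hhx with hlt | hgt
  · exact ⟨h, hh, hlt⟩
  · exact ⟨h⁻¹, inv_mem hh, (ap_inv_lt_self_iff (hG h hh)).mpr hgt⟩

lemma exists_mem_lt_ap_of_mem_GSupp (hG : ∀ g ∈ G, StrictMono (ap g)) {x : ℝ}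
    (hx : x ∈ GSupp G) : ∃ k ∈ G, x < ap k x := by
  obtain ⟨k, hk, hkx⟩ := exists_mem_ap_lt_of_mem_GSupp hG hx
  exact ⟨k⁻¹, inv_mem hk, (lt_ap_inv_self_iff (hG k hk)).mpr hkx⟩

lemma AdmitsTransitionChain.mono {H : Subgroup PermR} (h : AdmitsTransitionChain G)
    (hGH : G ≤ H) : AdmitsTransitionChain H :=
  let ⟨g, hg, k, hk, hgk⟩ := h
  ⟨g, hGH hg, k, hGH hk, hgk⟩

lemma commutator_mem {g k : PermR} (hg : g ∈ G) (hk : k ∈ G) : g⁻¹ * k⁻¹ * g * k ∈ G :=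
  mul_mem (mul_mem (mul_mem (inv_mem hg) (inv_mem hk)) hg) hk

lemma admitsTransitionChain_of_isOrbital_left (hG : ∀ g ∈ G, IsPL g) {g : PermR} (hg : g ∈ G)
    {a p : ℝ} (ho : IsOrbital g a p) (ha : a ∉ GSupp G) (hp : p ∈ GSupp G) :
    AdmitsTransitionChain G := by
  obtain ⟨k, hk, hpk⟩ := exists_mem_lt_ap_of_mem_GSupp (fun g hg => (hG g hg).1) hp
  have hka : ap k⁻¹ a = a := ap_eq_self_of_notMem_GSupp (inv_mem hk) ha
  have hmove := ap_commutator_ne_self (not_not.mp ho.2.2.2)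
    (ho.2.1 ⟨hka ▸ strictMono_ap_inv (hG k hk).1 ho.1, (ap_inv_lt_self_iff (hG k hk).1).mpr hpk⟩)
  obtain ⟨α, β, hu, hαp, hpβ⟩ := (hG _ (commutator_mem hg hk)).exists_isOrbital hmove
  have hfix := ap_commutator_eventuallyEq_id (hG g hg) (hG k hk) (not_not.mp ho.2.2.1)
    (ap_eq_self_of_notMem_GSupp hk ha) (Or.inl rfl)
  exact ⟨g, hg, _, commutator_mem hg hk, a, p, α, β, ho, hu,
    hu.lt_left_of_eventuallyEq_nhdsGT hfix (ho.1.trans hpβ), hαp, hpβ⟩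

lemma admitsTransitionChain_of_isOrbital_right (hG : ∀ g ∈ G, IsPL g) {g : PermR} (hg : g ∈ G)
    {p b : ℝ} (ho : IsOrbital g p b) (hb : b ∉ GSupp G) (hp : p ∈ GSupp G) :
    AdmitsTransitionChain G := by
  obtain ⟨k, hk, hkp⟩ := exists_mem_ap_lt_of_mem_GSupp (fun g hg => (hG g hg).1) hp
  have hkb : ap k⁻¹ b = b := ap_eq_self_of_notMem_GSupp (inv_mem hk) hb
  have hmove := ap_commutator_ne_self (not_not.mp ho.2.2.1)
    (ho.2.1 ⟨(lt_ap_inv_self_iff (hG k hk).1).mpr hkp, hkb ▸ strictMono_ap_inv (hG k hk).1 ho.1⟩)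
  obtain ⟨α, β, hu, hαp, hpβ⟩ := (hG _ (commutator_mem hg hk)).exists_isOrbital hmove
  have hfix := ap_commutator_eventuallyEq_id (hG g hg) (hG k hk) (not_not.mp ho.2.2.2)
    (ap_eq_self_of_notMem_GSupp hk hb) (Or.inr rfl)
  exact ⟨_, commutator_mem hg hk, g, hg, α, β, p, b, hu, ho, hαp, hpβ,
    hu.lt_right_of_eventuallyEq_nhdsLT hfix (hαp.trans ho.1)⟩

end TransitionChain

theorem statement6 (H : Subgroup PermR) (hPL : ∀ g ∈ H, IsPL g)
    (hchainless : ¬ AdmitsTransitionChain H) :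
    ∀ G : Subgroup PermR, G ≤ H → ∀ a b : ℝ, IsGroupOrbital G a b →
      ∀ g ∈ G, (RealisesLeftEnd g a b ↔ RealisesRightEnd g a b) := by
  intro G hGH a b hab g hg
  have hG : ∀ x ∈ G, IsPL x := fun x hx => hPL x (hGH hx)
  constructor
  · rintro ⟨p, hpb, ho⟩
    rcases hpb.eq_or_lt with rfl | hpb
    · exact ⟨a, le_rfl, ho⟩
    · exact (hchainless ((admitsTransitionChain_of_isOrbital_left hG hg ho hab.2.2.1
        (hab.2.1 ⟨ho.1, hpb⟩)).mono hGH)).elim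
  · rintro ⟨p, hap, ho⟩
    rcases hap.eq_or_lt with rfl | hap
    · exact ⟨b, le_rfl, ho⟩
    · exact (hchainless ((admitsTransitionChain_of_isOrbital_right hG hg ho hab.2.2.2
        (hab.2.1 ⟨hap, ho.1⟩)).mono hGH)).elim

end PLPaper
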